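/- The Wigner Hamiltonian H_w is symmetric on Schwartz functions: for Schwartz f, g on ℝ², ∬ conj(g) H_w f = ∬ conj(H_w g) f, where H_w f = ½(-(1/4)∂²_x f + p² f + V_eig(x,·) *_p f) with V real-valued. -/

import Mathlib

/-!
The `p²` term is symmetric pointwise, since `p²` is real. The kinetic term moves across the
pairing by integrating by parts twice along `(1, 0)` on `ℝ × ℝ`. The potential term is a
convolution in `p` with `V_eig(x, ·)`, which is integrable (a rescaled Fourier transform of a
Schwartz function) and Hermitian, `conj V_eig(x, -p) = V_eig(x, p)`, because `V` is real; Fubini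
then moves the convolution across. The potential term need not be integrable in `x`, so the two
`x`-integrals are compared through their difference, which involves only the kinetic terms.
-/

open MeasureTheory Complex SchwartzMap
open scoped LineDeriv FourierTransform ComplexConjugate

noncomputable section

def conjMulL : ℂ →L[ℝ] ℂ →L[ℝ] ℂ :=
  (ContinuousLinearMap.mul ℝ ℂ).comp conjCLE.toContinuousLinearMap

@[simp]
theorem conjMulL_apply (a b : ℂ) : conjMulL a b = conj a * b := rfl

theorem integral_eq_of_integral_sub_eq_zero {α E : Type*} [MeasurableSpace α] {μ : Measure α}
    [NormedAddCommGroup E] [NormedSpace ℝ E] {F G : α → E}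
    (hint : Integrable (fun x => F x - G x) μ) (hzero : ∫ x, F x - G x ∂μ = 0) :
    ∫ x, F x ∂μ = ∫ x, G x ∂μ := by
  by_cases hG : Integrable G μ
  · have hF : Integrable F μ := (hint.add hG).congr (.of_forall fun x => by simp)
    rwa [integral_sub hF hG, sub_eq_zero] at hzero
  · have hF : ¬ Integrable F μ := fun hF => hG ((hF.sub hint).congr (.of_forall fun x => by simp))
    rw [integral_undef hF, integral_undef hG]

theorem integral_const_mul_add_const_mul_add_const_mul {α 𝕜 : Type*} [MeasurableSpace α]
    {μ : Measure α} [RCLike 𝕜] {f₁ f₂ f₃ : α → 𝕜} (a b c : 𝕜) (h₁ : Integrable f₁ μ)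
    (h₂ : Integrable f₂ μ) (h₃ : Integrable f₃ μ) :
    ∫ x, a * f₁ x + b * f₂ x + c * f₃ x ∂μ
      = a * (∫ x, f₁ x ∂μ) + b * (∫ x, f₂ x ∂μ) + c * ∫ x, f₃ x ∂μ := by
  rw [integral_add ?_ (h₃.const_mul c), integral_add (h₁.const_mul a) (h₂.const_mul b),
    integral_const_mul, integral_const_mul, integral_const_mul]
  exact (h₁.const_mul a).add (h₂.const_mul b)

section Convolution

variable {G : Type*} [MeasurableSpace G] [AddCommGroup G] [MeasurableAdd₂ G] [MeasurableNeg G]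
  {μ : Measure G} [SFinite μ] [μ.IsAddLeftInvariant]

theorem integrable_integral_mul_sub {v φ : G → ℂ} (hv : Integrable v μ) (hφ : Integrable φ μ) :
    Integrable (fun p => ∫ t, v t * φ (p - t) ∂μ) μ :=
  hv.integrable_convolution (ContinuousLinearMap.mul ℂ ℂ) hφ

theorem integral_conj_mul_integral_mul_sub [μ.IsNegInvariant] {v φ ψ : G → ℂ} {C : ℝ}
    (hv : Integrable v μ) (hv_herm : ∀ t, conj (v (-t)) = v t)
    (hφ : Integrable φ μ) (hψ : Integrable ψ μ) (hψC : ∀ p, ‖ψ p‖ ≤ C) :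
    ∫ p, conj (ψ p) * ∫ t, v t * φ (p - t) ∂μ ∂μ
      = ∫ p, conj (∫ t, v t * ψ (p - t) ∂μ) * φ p ∂μ := by
  have hsubst : ∀ u : G → ℂ, ∀ p, ∫ t, v t * u (p - t) ∂μ = ∫ q, v (p - q) * u q ∂μ := by
    intro u p
    rw [← integral_sub_left_eq_self _ μ p]
    simp only [sub_sub_cancel]
  have hint : Integrable (Function.uncurry fun p q => conj (ψ p) * (v (p - q) * φ q)) (μ.prod μ) :=
    (hφ.convolution_integrand (ContinuousLinearMap.mul ℂ ℂ).flip hv).bdd_mul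
      hψ.aestronglyMeasurable.star.comp_fst (.of_forall fun z => by simpa using hψC z.1)
  calc ∫ p, conj (ψ p) * ∫ t, v t * φ (p - t) ∂μ ∂μ
      = ∫ p, ∫ q, conj (ψ p) * (v (p - q) * φ q) ∂μ ∂μ := by
        simp_rw [hsubst φ, integral_const_mul]
    _ = ∫ q, ∫ p, conj (ψ p) * (v (p - q) * φ q) ∂μ ∂μ := integral_integral_swap hint
    _ = ∫ q, conj (∫ p, v (q - p) * ψ p ∂μ) * φ q ∂μ := by
        refine integral_congr_ae (.of_forall fun q => ?_)
        simp only [← integral_conj, ← integral_mul_const]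
        refine integral_congr_ae (.of_forall fun p => ?_)
        simp only [map_mul, ← neg_sub p q, hv_herm]
        ring
    _ = ∫ q, conj (∫ t, v t * ψ (q - t) ∂μ) * φ q ∂μ := by simp_rw [hsubst ψ]

end Convolution

namespace SchwartzMap

section Slice

variable {E F G : Type*} [NormedAddCommGroup E] [NormedSpace ℝ E] [NormedAddCommGroup F]
  [NormedSpace ℝ F] [NormedAddCommGroup G] [NormedSpace ℝ G]

def slice (f : 𝓢(E × F, G)) (x : E) : 𝓢(F, G) :=
  compCLMOfAntilipschitz ℝ (K := 1) (g := Prod.mk x)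
    (by
      have : Prod.mk x = fun y => ContinuousLinearMap.inr ℝ E F y + (x, 0) := by
        ext y <;> simp
      rw [this]
      fun_prop)
    (AntilipschitzWith.of_le_mul_dist fun y y' => by simp [Prod.dist_eq]) f

theorem deriv_comp_prodMk_right (f : 𝓢(ℝ × F, G)) (y : F) :
    deriv (fun t => f (t, y)) = fun t => ∂_{((1 : ℝ), (0 : F))} f (t, y) := by
  funext t
  have hline : HasDerivAt (fun s : ℝ => (s, y)) ((1 : ℝ), (0 : F)) t :=
    (hasDerivAt_id t).prodMk (hasDerivAt_const t y)
  exact ((f.hasFDerivAt (t, y)).comp_hasDerivAt t hline).deriv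

theorem iteratedDeriv_two_comp_prodMk_right (f : 𝓢(ℝ × F, G)) (y : F) (t : ℝ) :
    iteratedDeriv 2 (fun s => f (s, y)) t
      = ∂_{((1 : ℝ), (0 : F))} (∂_{((1 : ℝ), (0 : F))} f) (t, y) := by
  rw [iteratedDeriv_succ, iteratedDeriv_one, deriv_comp_prodMk_right, deriv_comp_prodMk_right]

end Slice

section Pairing

variable {D : Type*} [NormedAddCommGroup D] [NormedSpace ℝ D] [FiniteDimensional ℝ D]
  [MeasurableSpace D] [BorelSpace D] {μ : Measure D}

theorem integrable_conj_mul [μ.HasTemperateGrowth] (g f : 𝓢(D, ℂ)) :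
    Integrable (fun z => conj (g z) * f z) μ :=
  (pairing conjMulL g f).integrable

theorem integral_conj_mul_lineDerivOp_lineDerivOp [μ.IsAddHaarMeasure] (g f : 𝓢(D, ℂ)) (m : D) :
    ∫ z, conj (g z) * ∂_{m} (∂_{m} f) z ∂μ = ∫ z, conj (∂_{m} (∂_{m} g) z) * f z ∂μ := by
  have h := integral_bilinear_lineDerivOp_right_eq_neg_left (μ := μ) (L := conjMulL) (v := m)
  simp only [conjMulL_apply] at h
  rw [h, h, neg_neg]

end Pairing

theorem integrable_conj_mul_sq_mul (ψ φ : 𝓢(ℝ, ℂ)) :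
    Integrable (fun p : ℝ => conj (ψ p) * ((p ^ 2 : ℝ) * φ p)) := by
  have hg : Function.HasTemperateGrowth (fun p : ℝ => ((p ^ 2 : ℝ) : ℂ)) := by fun_prop
  refine (integrable_conj_mul ψ (smulLeftCLM ℂ (fun p : ℝ => ((p ^ 2 : ℝ) : ℂ)) φ)).congr
    (.of_forall fun p => ?_)
  simp only [smulLeftCLM_apply_apply hg, smul_eq_mul]

theorem integrable_integral_conj_mul (g f : 𝓢(ℝ × ℝ, ℂ)) :
    Integrable (fun x : ℝ => ∫ p : ℝ, conj (g (x, p)) * f (x, p)) := by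
  have h := integrable_conj_mul g f (μ := volume)
  rw [Measure.volume_eq_prod] at h
  exact h.integral_prod_left

theorem integral_integral_conj_mul (g f : 𝓢(ℝ × ℝ, ℂ)) :
    ∫ x : ℝ, ∫ p : ℝ, conj (g (x, p)) * f (x, p) = ∫ z, conj (g z) * f z := by
  have h := integrable_conj_mul g f (μ := volume)
  rw [Measure.volume_eq_prod] at h ⊢
  exact (integral_prod _ h).symm

def reflectedSum (V : 𝓢(ℝ, ℝ)) (x : ℝ) : 𝓢(ℝ, ℂ) :=
  let h : 𝓢(ℝ, ℂ) := postcompCLM ofRealCLM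
    (compCLMOfAntilipschitz ℝ (K := 2) (g := fun y => x + y / 2)
      (by simp_rw [div_eq_mul_inv]; fun_prop)
      (AntilipschitzWith.of_le_mul_dist fun y y' => by
        rw [Real.dist_eq, Real.dist_eq, add_sub_add_left_eq_sub, ← sub_div, abs_div]
        simp [mul_div_cancel₀]) V)
  h + compCLMOfContinuousLinearEquiv ℝ (.neg ℝ) h

@[simp]
theorem reflectedSum_apply (V : 𝓢(ℝ, ℝ)) (x y : ℝ) :
    V.reflectedSum x y = ((V (x + y / 2) + V (x - y / 2) : ℝ) : ℂ) := by
  simp [reflectedSum, neg_div, ← sub_eq_add_neg]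

end SchwartzMap

theorem integral_mul_exp_neg_eq_fourier (w : ℝ → ℂ) (p : ℝ) :
    ∫ y : ℝ, w y * exp (-(I * p * y)) = 𝓕 w (p / (2 * Real.pi)) := by
  rw [Real.fourier_real_eq_integral_exp_smul]
  refine integral_congr_ae (.of_forall fun y => ?_)
  have hπ : (Real.pi : ℂ) ≠ 0 := ofReal_ne_zero.2 Real.pi_ne_zero
  simp only [smul_eq_mul, mul_comm (w y)]
  congr 2
  push_cast
  field_simp

theorem conj_integral_ofReal_mul_exp_neg (w : ℝ → ℝ) (p : ℝ) :
    conj (∫ y : ℝ, (w y : ℂ) * exp (-(I * (-p : ℝ) * y)))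
      = ∫ y : ℝ, (w y : ℂ) * exp (-(I * p * y)) := by
  rw [← integral_conj]
  refine integral_congr_ae (.of_forall fun y => ?_)
  simp only [map_mul, conj_ofReal, ← exp_conj, map_neg, conj_I]
  push_cast
  ring_nf

def wignerPotential (V : 𝓢(ℝ, ℝ)) (x p : ℝ) : ℂ :=
  (1 / (2 * Real.pi)) *
    ∫ y : ℝ, ((V (x + y / 2) + V (x - y / 2) : ℝ) : ℂ) * Complex.exp (-(Complex.I * p * y))

theorem integrable_wignerPotential (V : 𝓢(ℝ, ℝ)) (x : ℝ) : Integrable (wignerPotential V x) := by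
  have h : wignerPotential V x
      = fun p => (1 / (2 * Real.pi)) * 𝓕 (V.reflectedSum x) (p / (2 * Real.pi)) := by
    funext p
    simp only [wignerPotential, fourier_coe, ← integral_mul_exp_neg_eq_fourier,
      reflectedSum_apply]
  rw [h]
  exact ((𝓕 (V.reflectedSum x)).integrable.comp_div (by positivity)).const_mul _

theorem conj_wignerPotential_neg (V : 𝓢(ℝ, ℝ)) (x t : ℝ) :
    conj (wignerPotential V x (-t)) = wignerPotential V x t := by
  rw [wignerPotential, wignerPotential, map_mul,
    conj_integral_ofReal_mul_exp_neg (fun y => V (x + y / 2) + V (x - y / 2))]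
  simp [conj_ofReal, map_ofNat]

/-- The Wigner Hamiltonian at fixed `x`, as an operator in `p`. The argument `φ₂` stands for
`∂²ₓ φ`, which the fibre `φ` alone does not determine. -/
def wignerFiberHamiltonian (v : ℝ → ℂ) (φ₂ φ : ℝ → ℂ) (p : ℝ) : ℂ :=
  (1 / 2 : ℂ) * (-(1 / 4 : ℂ) * φ₂ p + (p ^ 2 : ℝ) * φ p + ∫ p', v p' * φ (p - p'))

theorem integral_conj_mul_wignerFiberHamiltonian_sub {v : ℝ → ℂ} (hv : Integrable v)
    (hv_herm : ∀ t, conj (v (-t)) = v t) (φ ψ φ₂ ψ₂ : 𝓢(ℝ, ℂ)) :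
    (∫ p, conj (ψ p) * wignerFiberHamiltonian v φ₂ φ p)
        - ∫ p, conj (wignerFiberHamiltonian v ψ₂ ψ p) * φ p
      = -(1 / 8) * ((∫ p, conj (ψ p) * φ₂ p) - ∫ p, conj (ψ₂ p) * φ p) := by
  have hψC : ∀ p, ‖ψ p‖ ≤ SchwartzMap.seminorm ℝ 0 0 ψ := norm_le_seminorm ℝ ψ
  have hφC : ∀ p, ‖φ p‖ ≤ SchwartzMap.seminorm ℝ 0 0 φ := norm_le_seminorm ℝ φ
  have hconvφ : Integrable (fun p => conj (ψ p) * ∫ t, v t * φ (p - t)) :=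
    (integrable_integral_mul_sub hv φ.integrable).bdd_mul ψ.continuous.star.aestronglyMeasurable
      (.of_forall fun p => by simpa using hψC p)
  have hconvψ : Integrable (fun p => conj (∫ t, v t * ψ (p - t)) * φ p) :=
    (conjCLE.toContinuousLinearMap.integrable_comp
      (integrable_integral_mul_sub hv ψ.integrable)).mul_bdd φ.continuous.aestronglyMeasurable
      (.of_forall hφC)
  have hL : ∫ p, conj (ψ p) * wignerFiberHamiltonian v φ₂ φ p
      = -(1 / 8) * (∫ p, conj (ψ p) * φ₂ p) + 1 / 2 * (∫ p, conj (ψ p) * ((p ^ 2 : ℝ) * φ p))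
        + 1 / 2 * ∫ p, conj (ψ p) * ∫ t, v t * φ (p - t) := by
    rw [← integral_const_mul_add_const_mul_add_const_mul _ _ _ (integrable_conj_mul ψ φ₂)
      (integrable_conj_mul_sq_mul ψ φ) hconvφ]
    congr with p
    simp only [wignerFiberHamiltonian]
    ring
  have hR : ∫ p, conj (wignerFiberHamiltonian v ψ₂ ψ p) * φ p
      = -(1 / 8) * (∫ p, conj (ψ₂ p) * φ p) + 1 / 2 * (∫ p, conj (ψ p) * ((p ^ 2 : ℝ) * φ p))
        + 1 / 2 * ∫ p, conj (∫ t, v t * ψ (p - t)) * φ p := by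
    rw [← integral_const_mul_add_const_mul_add_const_mul _ _ _ (integrable_conj_mul ψ₂ φ)
      (integrable_conj_mul_sq_mul ψ φ) hconvψ]
    congr with p
    simp only [wignerFiberHamiltonian, map_mul, map_add, map_neg, map_div₀, map_one, map_ofNat,
      conj_ofReal]
    ring
  rw [hL, hR, integral_conj_mul_integral_mul_sub hv hv_herm φ.integrable ψ.integrable hψC]
  ring

end

/-- the Wigner Hamiltonian H_w is symmetric on Schwartz functions:
∬ conj(g) H_w f = ∬ conj(H_w g) f. -/
theorem wigner_hamiltonian_symmetric
    (V : SchwartzMap ℝ ℝ)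
    (Veig : ℝ → ℝ → ℂ)
    (hVeig : ∀ x p, Veig x p =
      (1 / (2 * Real.pi)) *
        ∫ y : ℝ, ((V (x + y / 2) + V (x - y / 2) : ℝ) : ℂ) *
          Complex.exp (-(Complex.I * p * y)))
    (f g : SchwartzMap (ℝ × ℝ) ℂ)
    (Hwf Hwg : ℝ → ℝ → ℂ)
    (hHwf : ∀ x p, Hwf x p =
      (1 / 2 : ℂ) * (-(1 / 4 : ℂ) * iteratedDeriv 2 (fun t => f (t, p)) x
        + (p ^ 2 : ℝ) * f (x, p)
        + ∫ p' : ℝ, Veig x p' * f (x, p - p')))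
    (hHwg : ∀ x p, Hwg x p =
      (1 / 2 : ℂ) * (-(1 / 4 : ℂ) * iteratedDeriv 2 (fun t => g (t, p)) x
        + (p ^ 2 : ℝ) * g (x, p)
        + ∫ p' : ℝ, Veig x p' * g (x, p - p'))) :
    ∫ x : ℝ, ∫ p : ℝ, (starRingEnd ℂ) (g (x, p)) * Hwf x p =
      ∫ x : ℝ, ∫ p : ℝ, (starRingEnd ℂ) (Hwg x p) * f (x, p) := by
  obtain rfl : Veig = wignerPotential V := funext fun x => funext (hVeig x)
  let e : ℝ × ℝ := (1, 0)
  have hHwf' : ∀ x, Hwf x = wignerFiberHamiltonian (wignerPotential V x)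
      ((∂_{e} (∂_{e} f)).slice x) (f.slice x) := fun x => funext fun p => by
    rw [hHwf, iteratedDeriv_two_comp_prodMk_right]; rfl
  have hHwg' : ∀ x, Hwg x = wignerFiberHamiltonian (wignerPotential V x)
      ((∂_{e} (∂_{e} g)).slice x) (g.slice x) := fun x => funext fun p => by
    rw [hHwg, iteratedDeriv_two_comp_prodMk_right]; rfl
  have hfiber : ∀ x, (∫ p, conj (g (x, p)) * Hwf x p) - ∫ p, conj (Hwg x p) * f (x, p)
      = -(1 / 8) * ((∫ p, conj (g (x, p)) * ∂_{e} (∂_{e} f) (x, p))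
        - ∫ p, conj (∂_{e} (∂_{e} g) (x, p)) * f (x, p)) := fun x => by
    rw [hHwf', hHwg']
    exact integral_conj_mul_wignerFiberHamiltonian_sub (integrable_wignerPotential V x)
      (conj_wignerPotential_neg V x) (f.slice x) (g.slice x) _ _
  refine integral_eq_of_integral_sub_eq_zero ?_ ?_ <;> simp_rw [hfiber]
  · exact ((integrable_integral_conj_mul g _).sub (integrable_integral_conj_mul _ f)).const_mul _
  · rw [integral_const_mul, integral_sub (integrable_integral_conj_mul g _)
      (integrable_integral_conj_mul _ f), integral_integral_conj_mul, integral_integral_conj_mul,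
      integral_conj_mul_lineDerivOp_lineDerivOp, sub_self, mul_zero]
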